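/- Negative drift of log g_0: with L_0 = 5√(2π), for n large enough, (log g_0)'(x) ≤ −x/2 for all x ∈ [0, √(2·log(λ_0/L_0))]. -/

import Mathlib

/-!
Write `g = φ * γ₀` and `λ = λ₀`. Differentiating under the integral,
`g'(x) = ∫ u φ(x - u) γ₀(u) du - x g(x)`, so it suffices to show `∫ u φ(x - u) γ₀(u) du ≤ x g(x) / 2`.
Since `γ₀` is even, both integrals may be symmetrised in `u`, and
`φ(x ∓ u) = φ(x) e^{-u²/2} e^{± x u}`. From `φ(x - u) + φ(x + u) = 2 φ(x) e^{-u²/2} cosh (x u)` and the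
second moment `2 / λ²` of `γ₀` we get `g(x) ≥ (1 - 1/λ²) φ(x)`. From
`u (φ(x - u) - φ(x + u)) ≤ 2 x φ(x) u² e^{x|u|}` and the Laplace moment `∫ u² e^{-c|u|} = 4 / c³`
we get `∫ u φ(x - u) γ₀(u) du ≤ x φ(x) · 2λ / (λ - x)³`, which is at most `16 x φ(x) / λ²` as long
as `x ≤ λ / 2`; this holds on the whole range since `√(2 log n) ≤ n ≤ λ / 2`.
-/

open MeasureTheory Real Set

noncomputable section

/-- Standard normal density. -/
def phi (x : ℝ) : ℝ := Real.exp (-x ^ 2 / 2) / Real.sqrt (2 * Real.pi)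

/-- Spike inverse-scale `λ₀ = 5√(2π) n`. -/
def lam0 (n : ℕ) : ℝ := 5 * Real.sqrt (2 * Real.pi) * n

/-- Slab scale parameter `λ₁ = 0.05`. -/
def lam1 : ℝ := 0.05

/-- Spike density: Laplace with parameter `λ₀`. -/
def gamma0 (n : ℕ) (x : ℝ) : ℝ := lam0 n / 2 * Real.exp (-(lam0 n) * |x|)

/-- Slab density: Cauchy with scale `1/λ₁`. -/
def gamma1 (x : ℝ) : ℝ := lam1 / Real.pi * (1 + lam1 ^ 2 * x ^ 2)⁻¹

/-- `g₀ = φ * γ₀`. -/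
def g0 (n : ℕ) (x : ℝ) : ℝ := ∫ u, phi (x - u) * gamma0 n u

/-- `g₁ = φ * γ₁`. -/
def g1 (x : ℝ) : ℝ := ∫ u, phi (x - u) * gamma1 u

/-- `β(x) = g₁(x)/g₀(x) - 1` for the SSL prior. -/
def betaSSL (n : ℕ) (x : ℝ) : ℝ := g1 x / g0 n x - 1

open scoped Nat

lemma two_le_sqrt_two_mul_pi : (2 : ℝ) ≤ √(2 * π) :=
  (le_sqrt zero_le_two (by positivity)).2 (by nlinarith [pi_gt_three])

lemma phi_pos (t : ℝ) : 0 < phi t := by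
  unfold phi
  positivity

lemma phi_le_one (t : ℝ) : phi t ≤ 1 :=
  div_le_one_of_le₀ ((exp_le_one_iff.2 (by nlinarith [sq_nonneg t])).trans
    (by linarith [two_le_sqrt_two_mul_pi])) (sqrt_nonneg _)

lemma abs_mul_phi_le_one (t : ℝ) : |t| * phi t ≤ 1 := by
  have h_abs : |t| ≤ exp (t ^ 2 / 2) := by
    nlinarith [add_one_le_exp (t ^ 2 / 2), sq_abs t, sq_nonneg (|t| - 1)]
  have h_cancel : exp (t ^ 2 / 2) * exp (-t ^ 2 / 2) = 1 := by
    rw [← exp_add]; ring_nf; exact exp_zero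
  unfold phi
  rw [← mul_div_assoc, div_le_one (by linarith [two_le_sqrt_two_mul_pi])]
  nlinarith [mul_le_mul_of_nonneg_right h_abs (exp_pos (-t ^ 2 / 2)).le,
    two_le_sqrt_two_mul_pi]

lemma phi_add (x u : ℝ) : phi (x + u) = phi x * exp (-(x * u)) * exp (-u ^ 2 / 2) := by
  unfold phi
  rw [div_mul_eq_mul_div, div_mul_eq_mul_div, ← exp_add, ← exp_add]
  ring_nf

lemma phi_sub (x u : ℝ) : phi (x - u) = phi x * exp (x * u) * exp (-u ^ 2 / 2) := by
  rw [sub_eq_add_neg, phi_add, mul_neg, neg_neg, neg_sq]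

@[fun_prop]
lemma continuous_phi : Continuous phi := by
  unfold phi
  fun_prop

lemma hasDerivAt_phi (t : ℝ) : HasDerivAt phi (-t * phi t) t := by
  have h_exponent : HasDerivAt (fun s : ℝ => -s ^ 2 / 2) (-t) t :=
    (((hasDerivAt_pow 2 t).neg).div_const 2).congr_deriv (by ring)
  exact (h_exponent.exp.div_const √(2 * π)).congr_deriv (by unfold phi; ring)

lemma exp_sub_exp_neg_le (a : ℝ) : exp a - exp (-a) ≤ 2 * a * exp a := by
  have h_cancel : exp a * exp (-(2 * a)) = exp (-a) := by rw [← exp_add]; ring_nf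
  nlinarith [add_one_le_exp (-(2 * a)), exp_pos a]

lemma two_mul_phi_mul_one_sub_le (x u : ℝ) :
    2 * phi x * (1 - u ^ 2 / 2) ≤ phi (x - u) + phi (x + u) := by
  have h_sum : phi (x - u) + phi (x + u) = 2 * phi x * (exp (-u ^ 2 / 2) * cosh (x * u)) := by
    rw [phi_sub, phi_add, cosh_eq]
    ring
  have h_gauss : 1 - u ^ 2 / 2 ≤ exp (-u ^ 2 / 2) := by linarith [add_one_le_exp (-u ^ 2 / 2)]
  have h_cosh : exp (-u ^ 2 / 2) ≤ exp (-u ^ 2 / 2) * cosh (x * u) :=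
    le_mul_of_one_le_right (exp_pos _).le (one_le_cosh _)
  rw [h_sum]
  have := phi_pos x
  gcongr
  exact h_gauss.trans h_cosh

lemma mul_phi_sub_sub_phi_add_le {x : ℝ} (hx : 0 ≤ x) (u : ℝ) :
    u * (phi (x - u) - phi (x + u)) ≤ 2 * x * phi x * (u ^ 2 * exp (x * |u|)) := by
  have h_odd : u * (exp (x * u) - exp (-(x * u))) ≤ 2 * x * (u ^ 2 * exp (x * |u|)) := by
    have h := mul_le_mul_of_nonneg_left (exp_sub_exp_neg_le (x * |u|)) (abs_nonneg u)
    rcases abs_cases u with ⟨hu, -⟩ | ⟨hu, -⟩ <;> rw [hu] at h ⊢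
    · linarith
    · simp only [mul_neg, neg_neg] at h ⊢
      linarith
  have h_gauss : exp (-u ^ 2 / 2) ≤ 1 := exp_le_one_iff.2 (by nlinarith [sq_nonneg u])
  have h_rhs : 0 ≤ 2 * x * (u ^ 2 * exp (x * |u|)) := by positivity
  calc u * (phi (x - u) - phi (x + u))
      = phi x * (exp (-u ^ 2 / 2) * (u * (exp (x * u) - exp (-(x * u))))) := by
        rw [phi_sub, phi_add]; ring
    _ ≤ phi x * (2 * x * (u ^ 2 * exp (x * |u|))) := by
        refine mul_le_mul_of_nonneg_left ?_ (phi_pos x).le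
        exact (mul_le_mul_of_nonneg_left h_odd (exp_pos _).le).trans
          (mul_le_of_le_one_left h_rhs h_gauss)
    _ = 2 * x * phi x * (u ^ 2 * exp (x * |u|)) := by ring

lemma integral_eq_integral_add_comp_neg_div_two {f : ℝ → ℝ} (hf : Integrable f) :
    ∫ u, f u = (∫ u, (f u + f (-u))) / 2 := by
  rw [integral_add hf hf.comp_neg, integral_neg_eq_self]
  ring

section GaussianConvolution

variable {γ : ℝ → ℝ}

lemma integrable_phi_sub_mul (hγ : Integrable γ) (x : ℝ) :
    Integrable fun u => phi (x - u) * γ u :=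
  hγ.bdd_mul (c := 1) (by fun_prop : Continuous fun u => phi (x - u)).aestronglyMeasurable
    (ae_of_all _ fun u => by rw [norm_of_nonneg (phi_pos _).le]; exact phi_le_one _)

lemma hasDerivAt_integral_phi_sub_mul (hγ : Integrable γ) (hγ₁ : Integrable fun u => u * γ u)
    (x : ℝ) :
    HasDerivAt (fun y => ∫ u, phi (y - u) * γ u)
      ((∫ u, phi (x - u) * (u * γ u)) - x * ∫ u, phi (x - u) * γ u) x := by
  have h_bound : ∀ u y, ‖-(y - u) * phi (y - u) * γ u‖ ≤ |γ u| := fun u y => by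
    rw [norm_mul, norm_mul, norm_neg, norm_of_nonneg (phi_pos _).le, Real.norm_eq_abs,
      Real.norm_eq_abs]
    exact mul_le_of_le_one_left (abs_nonneg _) (abs_mul_phi_le_one _)
  have h := hasDerivAt_integral_of_dominated_loc_of_deriv_le (x₀ := x) Filter.univ_mem
    (Filter.Eventually.of_forall fun y => (integrable_phi_sub_mul hγ y).aestronglyMeasurable)
    (integrable_phi_sub_mul hγ x)
    (((by fun_prop : Continuous fun u => -(x - u) * phi (x - u)).aestronglyMeasurable).mul
      hγ.aestronglyMeasurable)
    (ae_of_all _ fun u y _ => h_bound u y) hγ.abs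
    (ae_of_all _ fun u y _ => ((hasDerivAt_phi (y - u)).comp_sub_const y u).mul_const (γ u))
  refine h.2.congr_deriv ?_
  rw [← integral_const_mul, ← integral_sub (integrable_phi_sub_mul hγ₁ x)
    ((integrable_phi_sub_mul hγ x).const_mul x)]
  congr 1 with u
  ring

variable (hγ_even : ∀ u, γ (-u) = γ u) (hγ_nonneg : ∀ u, 0 ≤ γ u)
include hγ_even hγ_nonneg

lemma phi_mul_le_integral_phi_sub_mul (hγ : Integrable γ) (hγ₂ : Integrable fun u => u ^ 2 * γ u)
    (x : ℝ) :
    phi x * ((∫ u, γ u) - (∫ u, u ^ 2 * γ u) / 2) ≤ ∫ u, phi (x - u) * γ u := by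
  have h_split : (fun u => 2 * phi x * (1 - u ^ 2 / 2) * γ u)
      = fun u => 2 * phi x * γ u - phi x * (u ^ 2 * γ u) := by
    ext u; ring
  have h_lhs : phi x * ((∫ u, γ u) - (∫ u, u ^ 2 * γ u) / 2)
      = (∫ u, 2 * phi x * (1 - u ^ 2 / 2) * γ u) / 2 := by
    rw [h_split, integral_sub (hγ.const_mul _) (hγ₂.const_mul _), integral_const_mul,
      integral_const_mul]
    ring
  have h_int : Integrable fun u => phi (x - u) * γ u := integrable_phi_sub_mul hγ x
  rw [h_lhs, integral_eq_integral_add_comp_neg_div_two h_int]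
  refine div_le_div_of_nonneg_right (integral_mono ?_ (h_int.add h_int.comp_neg) fun u => ?_)
    zero_le_two
  · rw [h_split]
    exact (hγ.const_mul _).sub (hγ₂.const_mul _)
  · rw [sub_neg_eq_add, hγ_even, ← add_mul]
    exact mul_le_mul_of_nonneg_right (two_mul_phi_mul_one_sub_le x u) (hγ_nonneg u)

lemma integral_phi_sub_mul_mul_le {x : ℝ} (hx : 0 ≤ x) (hγ₁ : Integrable fun u => u * γ u)
    (hγ₂ : Integrable fun u => u ^ 2 * exp (x * |u|) * γ u) :
    ∫ u, phi (x - u) * (u * γ u) ≤ x * phi x * ∫ u, u ^ 2 * exp (x * |u|) * γ u := by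
  have h_int : Integrable fun u => phi (x - u) * (u * γ u) := integrable_phi_sub_mul hγ₁ x
  rw [integral_eq_integral_add_comp_neg_div_two h_int, ← integral_const_mul,
    div_le_iff₀ zero_lt_two, ← integral_mul_const]
  refine integral_mono (h_int.add h_int.comp_neg) ((hγ₂.const_mul _).mul_const _) fun u => ?_
  calc phi (x - u) * (u * γ u) + phi (x - -u) * (-u * γ (-u))
      = u * (phi (x - u) - phi (x + u)) * γ u := by rw [sub_neg_eq_add, hγ_even]; ring
    _ ≤ 2 * x * phi x * (u ^ 2 * exp (x * |u|)) * γ u :=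
        mul_le_mul_of_nonneg_right (mul_phi_sub_sub_phi_add_le hx u) (hγ_nonneg u)
    _ = x * phi x * (u ^ 2 * exp (x * |u|) * γ u) * 2 := by ring

end GaussianConvolution

section LaplaceMoments

variable {b : ℝ}

lemma integral_pow_mul_exp_neg_mul_Ioi (k : ℕ) (hb : 0 < b) :
    ∫ t in Ioi 0, t ^ k * exp (-b * t) = k ! / b ^ (k + 1) := by
  have h := integral_rpow_mul_exp_neg_mul_Ioi (a := k + 1) (by positivity) hb
  rw [add_sub_cancel_right, Gamma_nat_eq_factorial, ← Nat.cast_add_one, rpow_natCast,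
    div_pow, one_pow] at h
  simp only [rpow_natCast] at h
  simp only [neg_mul, h]
  ring

lemma integral_abs_pow_mul_exp_neg_mul_abs (k : ℕ) (hb : 0 < b) :
    ∫ u, |u| ^ k * exp (-b * |u|) = 2 * k ! / b ^ (k + 1) := by
  rw [integral_comp_abs (f := fun t => t ^ k * exp (-b * t)),
    integral_pow_mul_exp_neg_mul_Ioi k hb, mul_div_assoc]

lemma integrable_pow_mul_exp_neg_mul_abs (k : ℕ) (hb : 0 < b) :
    Integrable fun u => u ^ k * exp (-b * |u|) := by
  have h_abs : Integrable fun u => |u| ^ k * exp (-b * |u|) :=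
    .of_integral_ne_zero (by rw [integral_abs_pow_mul_exp_neg_mul_abs k hb]; positivity)
  refine h_abs.mono' (by fun_prop) (ae_of_all _ fun u => ?_)
  rw [norm_mul, norm_pow, Real.norm_eq_abs, Real.norm_eq_abs, abs_exp]

lemma integral_sq_mul_exp_neg_mul_abs (hb : 0 < b) :
    ∫ u, u ^ 2 * exp (-b * |u|) = 4 / b ^ 3 := by
  have h := integral_abs_pow_mul_exp_neg_mul_abs 2 hb
  simp only [sq_abs] at h
  rw [h]
  norm_num

end LaplaceMoments

lemma sqrt_two_mul_log_le {t : ℝ} (ht : 0 < t) : √(2 * log t) ≤ t :=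
  sqrt_le_iff.2 ⟨ht.le, by nlinarith [log_le_sub_one_of_pos ht, sq_nonneg (t - 1)]⟩

lemma two_mul_div_sub_pow_three_le {l x : ℝ} (hl : 6 ≤ l) (hxl : x ≤ l / 2) :
    2 * l / (l - x) ^ 3 ≤ (1 - 1 / l ^ 2) / 2 :=
  calc 2 * l / (l - x) ^ 3 ≤ 2 * l / (l / 2) ^ 3 := by gcongr; linarith
    _ = 16 / l ^ 2 := by field_simp; ring
    _ ≤ (1 - 1 / l ^ 2) / 2 := by
        rw [div_le_iff₀ (by positivity)]
        field_simp
        nlinarith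

section Spike

variable {n : ℕ}

lemma lam0_pos (hn : 0 < n) : 0 < lam0 n := by
  unfold lam0
  positivity

lemma ten_mul_le_lam0 (n : ℕ) : 10 * (n : ℝ) ≤ lam0 n := by
  unfold lam0
  nlinarith [two_le_sqrt_two_mul_pi, Nat.cast_nonneg (α := ℝ) n]

lemma lam0_div_five_mul_sqrt (n : ℕ) : lam0 n / (5 * √(2 * π)) = n :=
  mul_div_cancel_left₀ _ (by positivity)

lemma gamma0_neg (n : ℕ) (u : ℝ) : gamma0 n (-u) = gamma0 n u := by
  rw [gamma0, gamma0, abs_neg]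

lemma gamma0_nonneg (n : ℕ) (u : ℝ) : 0 ≤ gamma0 n u := by
  unfold gamma0 lam0
  positivity

lemma integrable_pow_mul_gamma0 (hn : 0 < n) (k : ℕ) :
    Integrable fun u => u ^ k * gamma0 n u := by
  simpa only [gamma0, mul_left_comm] using
    (integrable_pow_mul_exp_neg_mul_abs k (lam0_pos hn)).const_mul (lam0 n / 2)

lemma integrable_gamma0 (hn : 0 < n) : Integrable (gamma0 n) := by
  simpa using integrable_pow_mul_gamma0 hn 0

lemma integral_gamma0 (hn : 0 < n) : ∫ u, gamma0 n u = 1 := by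
  have h := integral_abs_pow_mul_exp_neg_mul_abs 0 (lam0_pos hn)
  simp only [pow_zero, one_mul] at h
  simp only [gamma0]
  rw [integral_const_mul, h]
  field_simp [(lam0_pos hn).ne']
  norm_num

lemma integral_sq_mul_gamma0 (hn : 0 < n) : ∫ u, u ^ 2 * gamma0 n u = 2 / lam0 n ^ 2 := by
  simp only [gamma0, mul_left_comm _ (lam0 n / 2)]
  rw [integral_const_mul, integral_sq_mul_exp_neg_mul_abs (lam0_pos hn)]
  field_simp [(lam0_pos hn).ne']
  ring

lemma sq_mul_exp_mul_abs_mul_gamma0 (n : ℕ) (x : ℝ) :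
    (fun u => u ^ 2 * exp (x * |u|) * gamma0 n u)
      = fun u => lam0 n / 2 * (u ^ 2 * exp (-(lam0 n - x) * |u|)) := by
  ext u
  rw [gamma0, show -(lam0 n - x) * |u| = x * |u| + -lam0 n * |u| by ring, exp_add]
  ring

lemma integral_sq_mul_exp_mul_abs_mul_gamma0 {x : ℝ} (hxl : x < lam0 n) :
    ∫ u, u ^ 2 * exp (x * |u|) * gamma0 n u = 2 * lam0 n / (lam0 n - x) ^ 3 := by
  rw [sq_mul_exp_mul_abs_mul_gamma0, integral_const_mul,
    integral_sq_mul_exp_neg_mul_abs (sub_pos.2 hxl)]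
  ring

lemma phi_mul_le_g0 (hn : 0 < n) (x : ℝ) : (1 - 1 / lam0 n ^ 2) * phi x ≤ g0 n x := by
  have h := phi_mul_le_integral_phi_sub_mul (gamma0_neg n) (gamma0_nonneg n)
    (integrable_gamma0 hn) (integrable_pow_mul_gamma0 hn 2) x
  rw [integral_gamma0 hn, integral_sq_mul_gamma0 hn] at h
  calc (1 - 1 / lam0 n ^ 2) * phi x = phi x * (1 - 2 / lam0 n ^ 2 / 2) := by ring
    _ ≤ g0 n x := h

lemma hasDerivAt_g0 (hn : 0 < n) (x : ℝ) :
    HasDerivAt (g0 n) ((∫ u, phi (x - u) * (u * gamma0 n u)) - x * g0 n x) x :=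
  hasDerivAt_integral_phi_sub_mul (integrable_gamma0 hn)
    (by simpa using integrable_pow_mul_gamma0 hn 1) x

lemma integral_phi_sub_mul_mul_gamma0_le (hn : 0 < n) {x : ℝ} (hx : 0 ≤ x) (hxl : x < lam0 n) :
    ∫ u, phi (x - u) * (u * gamma0 n u) ≤ x * phi x * (2 * lam0 n / (lam0 n - x) ^ 3) := by
  have h_int : Integrable fun u => u ^ 2 * exp (x * |u|) * gamma0 n u := by
    rw [sq_mul_exp_mul_abs_mul_gamma0]
    exact (integrable_pow_mul_exp_neg_mul_abs 2 (sub_pos.2 hxl)).const_mul _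
  rw [← integral_sq_mul_exp_mul_abs_mul_gamma0 hxl]
  exact integral_phi_sub_mul_mul_le (gamma0_neg n) (gamma0_nonneg n) hx
    (by simpa using integrable_pow_mul_gamma0 hn 1) h_int

end Spike

/-- Lemma: negative drift of `log g₀`.  With
`L₀ = 5√(2π)`, for `n` large enough, `(log g₀)'(x) ≤ -x/2` for every
`x ∈ [0, √(2 log(λ₀/L₀))]`. -/
theorem log_g0_deriv_negative_drift :
    ∃ N0 : ℕ, ∀ n : ℕ, N0 ≤ n →
      ∀ x ∈ Set.Icc (0 : ℝ)
          (Real.sqrt (2 * Real.log (lam0 n / (5 * Real.sqrt (2 * Real.pi))))),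
        deriv (fun y => Real.log (g0 n y)) x ≤ -x / 2 := by
  refine ⟨1, fun n hn x ⟨hx, hx_le⟩ => ?_⟩
  have hn_real : (1 : ℝ) ≤ n := by exact_mod_cast hn
  have h_lam := ten_mul_le_lam0 n
  rw [lam0_div_five_mul_sqrt] at hx_le
  have hx_lam : x ≤ lam0 n / 2 := by linarith [sqrt_two_mul_log_le (by linarith : (0 : ℝ) < n)]
  have h_ratio := two_mul_div_sub_pow_three_le (by linarith) hx_lam
  have h_lower := phi_mul_le_g0 hn x
  have h_pos : 0 < g0 n x := by
    refine lt_of_lt_of_le (mul_pos ?_ (phi_pos x)) h_lower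
    have : 0 < 2 * lam0 n / (lam0 n - x) ^ 3 := div_pos (by linarith) (pow_pos (by linarith) 3)
    linarith
  have h_drift : ∫ u, phi (x - u) * (u * gamma0 n u) ≤ x * g0 n x / 2 :=
    calc _ ≤ x * phi x * (2 * lam0 n / (lam0 n - x) ^ 3) :=
          integral_phi_sub_mul_mul_gamma0_le hn hx (by linarith)
      _ ≤ x * phi x * ((1 - 1 / lam0 n ^ 2) / 2) := by have := phi_pos x; gcongr
      _ = x * ((1 - 1 / lam0 n ^ 2) * phi x) / 2 := by ring
      _ ≤ x * g0 n x / 2 := by gcongr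
  rw [((hasDerivAt_g0 hn x).log h_pos.ne').deriv, div_le_iff₀ h_pos]
  linarith

end
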